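/- Let p : ℝ → ℝ satisfy 1 < p₋ := inf_{x∈ℝ} p(x) and sup_{x∈ℝ} p(x) =: p₊ < ∞, and suppose there exist constants c₀ > 0, c_∞ > 0 and p_∞ > 1 such that |p(x) − p(y)| ≤ c₀/log(e + 1/|x−y|) for all x, y ∈ ℝ with x ≠ y, and |p(x) − p_∞| ≤ c_∞/log(e + |x|) for all x ∈ ℝ. Put θ_p := min{1, 2/p₊, 2 − 2/p₋}, fix θ ∈ (0, θ_p), and define p_θ(x) := 2(1−θ)p(x)/(2 − θ·p(x)) and (p_θ)_∞ := 2(1−θ)p_∞/(2 − θ·p_∞). Then, with C := 4(1−θ)/(2 − θ·p₊)², one has |p_θ(x) − p_θ(y)| ≤ C·c₀/log(e + 1/|x−y|) for all x ≠ y and |p_θ(x) − (p_θ)_∞| ≤ C·c_∞/log(e + |x|) for all x ∈ ℝ; that is, p_θ is again globally log-Hölder continuous. -/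
import Mathlib

lemma ptheta_lip (θ pp a b : ℝ) (hθ1 : θ < 1) (hpp : 0 < 2 - θ * pp)
    (ha : a ≤ pp) (hb : b ≤ pp) (hθ0 : 0 < θ) :
    |2 * (1 - θ) * a / (2 - θ * a) - 2 * (1 - θ) * b / (2 - θ * b)|
      ≤ 4 * (1 - θ) / (2 - θ * pp) ^ 2 * |a - b| := by
  have ha' : 0 < 2 - θ * a := by nlinarith
  have hb' : 0 < 2 - θ * b := by nlinarith
  have key : 2 * (1 - θ) * a / (2 - θ * a) - 2 * (1 - θ) * b / (2 - θ * b)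
      = 4 * (1 - θ) * (a - b) / ((2 - θ * a) * (2 - θ * b)) := by
    field_simp
    ring
  rw [key, abs_div, abs_mul]
  have h1 : |4 * (1 - θ)| = 4 * (1 - θ) := abs_of_pos (by nlinarith)
  have h2 : |(2 - θ * a) * (2 - θ * b)| = (2 - θ * a) * (2 - θ * b) :=
    abs_of_pos (mul_pos ha' hb')
  rw [h1, h2]
  rw [div_le_iff₀ (mul_pos ha' hb')]
  have e1 : 2 - θ * pp ≤ 2 - θ * a := by nlinarith
  have e2 : 2 - θ * pp ≤ 2 - θ * b := by nlinarith
  have hD : (2 - θ * pp) ^ 2 ≤ (2 - θ * a) * (2 - θ * b) := by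
    nlinarith [mul_le_mul e1 e2 hpp.le ha'.le]
  have hC : (0:ℝ) < 4 * (1 - θ) / (2 - θ * pp) ^ 2 :=
    div_pos (by nlinarith) (by positivity)
  have habs : (0:ℝ) ≤ |a - b| := abs_nonneg _
  calc 4 * (1 - θ) * |a - b|
      = (4 * (1 - θ) / (2 - θ * pp) ^ 2) * |a - b| * (2 - θ * pp) ^ 2 := by
        field_simp
    _ ≤ 4 * (1 - θ) / (2 - θ * pp) ^ 2 * |a - b| * ((2 - θ * a) * (2 - θ * b)) := by
        apply mul_le_mul_of_nonneg_left hD (by positivity)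

/-- Lemma 2.1: global log-Hölder continuity is preserved by the interpolation
construction `p ↦ p_θ`, `p_θ(x) = 2(1-θ)p(x)/(2 - θ·p(x))`, with the explicit
constant `C = 4(1-θ)/(2 - θ·p₊)²`. -/
theorem logHolder_stable_under_ptheta
    (p : ℝ → ℝ) (pm pp : ℝ) (hpm : 1 < pm)
    (hbd : ∀ x : ℝ, pm ≤ p x ∧ p x ≤ pp)
    (c₀ cinf pinf : ℝ) (hc₀ : 0 < c₀) (hcinf : 0 < cinf) (hpinf : 1 < pinf)
    (hLH : ∀ x y : ℝ, x ≠ y → |p x - p y| ≤ c₀ / Real.log (Real.exp 1 + 1 / |x - y|))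
    (hLHinf : ∀ x : ℝ, |p x - pinf| ≤ cinf / Real.log (Real.exp 1 + |x|))
    (θ : ℝ) (hθ0 : 0 < θ) (hθ1 : θ < min 1 (min (2 / pp) (2 - 2 / pm))) :
    (∀ x y : ℝ, x ≠ y →
        |2 * (1 - θ) * p x / (2 - θ * p x) - 2 * (1 - θ) * p y / (2 - θ * p y)|
          ≤ 4 * (1 - θ) / (2 - θ * pp) ^ 2 * c₀ / Real.log (Real.exp 1 + 1 / |x - y|)) ∧
    (∀ x : ℝ,
        |2 * (1 - θ) * p x / (2 - θ * p x) - 2 * (1 - θ) * pinf / (2 - θ * pinf)|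
          ≤ 4 * (1 - θ) / (2 - θ * pp) ^ 2 * cinf / Real.log (Real.exp 1 + |x|)) := by
  have hθlt1 : θ < 1 := lt_of_lt_of_le hθ1 (min_le_left _ _)
  have hθ2pp : θ < 2 / pp := lt_of_lt_of_le hθ1 (le_trans (min_le_right _ _) (min_le_left _ _))
  have hpp0 : 0 < pp := by have := hbd 0; linarith
  have hpp : 0 < 2 - θ * pp := by
    have := (lt_div_iff₀ hpp0).mp hθ2pp
    linarith
  have hC : (0:ℝ) < 4 * (1 - θ) / (2 - θ * pp) ^ 2 :=
    div_pos (by nlinarith) (by positivity)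
  -- pinf ≤ pp
  have hpinfpp : pinf ≤ pp := by
    by_contra h
    push_neg at h
    set x := Real.exp (cinf / (pinf - pp)) with hx
    have hx0 : 0 < x := Real.exp_pos _
    have hlog : cinf / (pinf - pp) < Real.log (Real.exp 1 + |x|) := by
      rw [abs_of_pos hx0]
      have h1 : cinf / (pinf - pp) = Real.log x := (Real.log_exp _).symm
      rw [h1]
      apply Real.log_lt_log hx0
      have := Real.exp_pos 1
      linarith
    have hlogpos : 0 < Real.log (Real.exp 1 + |x|) := by
      have : 0 < cinf / (pinf - pp) := div_pos hcinf (by linarith)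
      linarith
    have h2 : cinf / Real.log (Real.exp 1 + |x|) < pinf - pp := by
      rw [div_lt_iff₀ hlogpos]
      have := (div_lt_iff₀ (by linarith : (0:ℝ) < pinf - pp)).mp hlog
      nlinarith
    have h3 := hLHinf x
    have h4 : pinf - p x ≤ |p x - pinf| := by
      rw [abs_sub_comm]; exact le_abs_self _
    have h5 := (hbd x).2
    linarith
  constructor
  · intro x y hxy
    have habs : 0 < |x - y| := abs_pos.mpr (sub_ne_zero.mpr hxy)
    have hlog1 : 1 ≤ Real.log (Real.exp 1 + 1 / |x - y|) := by
      rw [Real.le_log_iff_exp_le (by positivity)]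
      have : 0 < 1 / |x - y| := by positivity
      linarith
    have hlogpos : 0 < Real.log (Real.exp 1 + 1 / |x - y|) := by linarith
    have h1 := ptheta_lip θ pp (p x) (p y) hθlt1 hpp (hbd x).2 (hbd y).2 hθ0
    have h2 := hLH x y hxy
    calc |2 * (1 - θ) * p x / (2 - θ * p x) - 2 * (1 - θ) * p y / (2 - θ * p y)|
        ≤ 4 * (1 - θ) / (2 - θ * pp) ^ 2 * |p x - p y| := h1
      _ ≤ 4 * (1 - θ) / (2 - θ * pp) ^ 2 * (c₀ / Real.log (Real.exp 1 + 1 / |x - y|)) :=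
          mul_le_mul_of_nonneg_left h2 hC.le
      _ = 4 * (1 - θ) / (2 - θ * pp) ^ 2 * c₀ / Real.log (Real.exp 1 + 1 / |x - y|) := by
          ring
  · intro x
    have hlog1 : 1 ≤ Real.log (Real.exp 1 + |x|) := by
      have h0 : (0:ℝ) < Real.exp 1 + |x| := by positivity
      rw [Real.le_log_iff_exp_le h0]
      have : 0 ≤ |x| := abs_nonneg _
      linarith
    have h1 := ptheta_lip θ pp (p x) pinf hθlt1 hpp (hbd x).2 hpinfpp hθ0
    have h2 := hLHinf x
    calc |2 * (1 - θ) * p x / (2 - θ * p x) - 2 * (1 - θ) * pinf / (2 - θ * pinf)|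
        ≤ 4 * (1 - θ) / (2 - θ * pp) ^ 2 * |p x - pinf| := h1
      _ ≤ 4 * (1 - θ) / (2 - θ * pp) ^ 2 * (cinf / Real.log (Real.exp 1 + |x|)) :=
          mul_le_mul_of_nonneg_left h2 hC.le
      _ = 4 * (1 - θ) / (2 - θ * pp) ^ 2 * cinf / Real.log (Real.exp 1 + |x|) := by
          ring
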